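/- (Proposition 2.) Let A₁ = exp(X) with X ~ N(μ, σ²), σ > 0, let d₂ > 0, and let μ̃ := ½ ln((e + d₂)⁴/(w + (e + d₂)²)), σ̃ := √(ln(w/(e + d₂)² + 1)) with e := exp(μ + σ²/2), w := exp(2μ + σ²)(exp(σ²) − 1), so that σ̃ < σ. With f(x) := (x − d₂)^σ̃ / x^σ on (d₂, ∞) and c := exp(σ̃μ − σμ̃), there exist unique d₁*, d₁** with d₂ < d₁* < σd₂/(σ − σ̃) < d₁** such that f(d₁*) = f(d₁**) = c; and for every d₁ > d₂, the moment-matched lognormal model underestimates the limiting default probability of firm 1 under cross-ownership of debt only, i.e. Φ((ln d₁ − μ̃)/σ̃) < Φ((ln(d₁ − d₂) − μ)/σ), if and only if d₁* < d₁ < d₁**. -/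

import Mathlib

/-!
Taking logarithms, `Φ((ln d₁ − μ̃)/σ̃) < Φ((ln(d₁ − d₂) − μ)/σ)` says `σ̃μ − σμ̃ < ln f(d₁)`.
On `(d₂, ∞)` the function `ln f` increases strictly up to `σd₂/(σ − σ̃)`, then decreases strictly,
and tends to `−∞` at both ends, so everything follows once `ln f` exceeds the level somewhere.
If it did not, the survival function of the matched lognormal `W` would be dominated by that of
`V* = A₁ + d₂` on `(d₂, ∞)`, while being `< 1 = P(V* > t)` on `(0, d₂]`; the tail-integral formula
`E W = ∫₀^∞ P(W > t) dt` would then give `E W < E V*`, contradicting moment matching.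
-/

/-- The standard normal distribution function `Φ`. -/
noncomputable def stdNormalCdf (x : ℝ) : ℝ :=
  ((ProbabilityTheory.gaussianReal 0 1) (Set.Iic x)).toReal

open MeasureTheory ProbabilityTheory Real Set Filter Topology
open scoped ENNReal

lemma stdNormalCdf_strictMono : StrictMono stdNormalCdf := by
  intro x y hxy
  have hIoc : 0 < (gaussianReal 0 1).real (Ioc x y) := by
    refine ENNReal.toReal_pos (fun h => ?_) (measure_ne_top _ _)
    exact hxy.not_ge (by simpa using gaussianReal_absolutelyContinuous' 0 one_ne_zero h)
  have hsplit := measureReal_union (μ := gaussianReal 0 1) (s₂ := Ioc x y)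
    (Iic_disjoint_Ioc le_rfl) measurableSet_Ioc
  rw [Iic_union_Ioc_eq_Iic hxy.le] at hsplit
  simp only [stdNormalCdf, ← measureReal_def]
  linarith

lemma stdNormalCdf_pos (x : ℝ) : 0 < stdNormalCdf x :=
  ENNReal.toReal_nonneg.trans_lt (stdNormalCdf_strictMono (sub_one_lt x))

lemma gaussianReal_Ioi (c : ℝ) :
    gaussianReal 0 1 (Ioi c) = ENNReal.ofReal (1 - stdNormalCdf c) := by
  rw [← compl_Iic, prob_compl_eq_one_sub measurableSet_Iic, stdNormalCdf,
    ENNReal.ofReal_sub _ ENNReal.toReal_nonneg, ENNReal.ofReal_one,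
    ENNReal.ofReal_toReal (measure_ne_top _ _)]

lemma lintegral_exp_affine_gaussianReal (m s : ℝ) :
    ∫⁻ x, ENNReal.ofReal (exp (m + s * x)) ∂gaussianReal 0 1
      = ENNReal.ofReal (exp (m + s ^ 2 / 2)) := by
  have hsplit : (fun x => exp (m + s * x)) = fun x => exp m * exp (s * x) :=
    funext fun x => exp_add m (s * x)
  rw [← ofReal_integral_eq_lintegral_ofReal
      (hsplit ▸ (integrable_exp_mul_gaussianReal s).const_mul (exp m))
      (ae_of_all _ fun x => (exp_pos _).le),
    hsplit, integral_const_mul]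
  have hmgf := congrFun (mgf_id_gaussianReal (μ := 0) (v := 1)) s
  simp only [mgf, id, zero_mul, NNReal.coe_one, one_mul, zero_add] at hmgf
  rw [hmgf, ← exp_add]

lemma lintegral_lognormal_survival (m s : ℝ) (hs : 0 < s) :
    ∫⁻ t in Ioi 0, ENNReal.ofReal (1 - stdNormalCdf ((log t - m) / s))
      = ENNReal.ofReal (exp (m + s ^ 2 / 2)) := by
  rw [← lintegral_exp_affine_gaussianReal, lintegral_eq_lintegral_meas_lt _
    (ae_of_all _ fun x => (exp_pos _).le) (by fun_prop)]
  refine setLIntegral_congr_fun measurableSet_Ioi fun t ht => ?_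
  have hlevel : {x : ℝ | t < exp (m + s * x)} = Ioi ((log t - m) / s) := by
    ext x
    rw [mem_ofPred_eq, mem_Ioi, ← log_lt_iff_lt_exp ht, div_lt_iff₀ hs]
    constructor <;> intro h <;> linarith
  rw [hlevel, gaussianReal_Ioi]

lemma setLIntegral_Ioi_comp_sub (d : ℝ) (g : ℝ → ℝ≥0∞) :
    ∫⁻ t in Ioi d, g (t - d) = ∫⁻ t in Ioi 0, g t := by
  rw [← lintegral_indicator measurableSet_Ioi, ← lintegral_indicator measurableSet_Ioi,
    ← lintegral_sub_right_eq_self (indicator (Ioi 0) g) d]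
  congr 1
  ext t
  simp [indicator]

lemma exists_lt_of_lognormal_mean_eq_add {μ σ d μt σt : ℝ} (hσ : 0 < σ) (hσt : 0 < σt)
    (hd : 0 < d) (hmean : exp (μt + σt ^ 2 / 2) = exp (μ + σ ^ 2 / 2) + d) :
    ∃ q, d < q ∧ (log q - μt) / σt < (log (q - d) - μ) / σ := by
  by_contra! H
  set G : ℝ → ℝ≥0∞ := fun t => ENNReal.ofReal (1 - stdNormalCdf ((log t - μt) / σt))
  have hG : ∀ t, G t < 1 := fun t =>
    ENNReal.ofReal_lt_one.2 (by linarith [stdNormalCdf_pos ((log t - μt) / σt)])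
  have hhead : ∫⁻ t in Ioc 0 d, G t < ENNReal.ofReal d := by
    calc ∫⁻ t in Ioc 0 d, G t < ∫⁻ _ in Ioc 0 d, 1 :=
          setLIntegral_strict_mono measurableSet_Ioc (by simp [hd]) measurable_const
            (ne_top_of_le_ne_top (by simp) (lintegral_mono fun t => (hG t).le))
            (ae_of_all _ fun t _ => hG t)
      _ = ENNReal.ofReal d := by simp
  have htail : ∫⁻ t in Ioi d, G t ≤ ENNReal.ofReal (exp (μ + σ ^ 2 / 2)) := by
    calc ∫⁻ t in Ioi d, G t
        ≤ ∫⁻ t in Ioi d, ENNReal.ofReal (1 - stdNormalCdf ((log (t - d) - μ) / σ)) :=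
          setLIntegral_mono' measurableSet_Ioi fun t ht => ENNReal.ofReal_le_ofReal
            (by linarith [stdNormalCdf_strictMono.monotone (H t ht)])
      _ = ENNReal.ofReal (exp (μ + σ ^ 2 / 2)) := by
          rw [setLIntegral_Ioi_comp_sub d
            (fun u => ENNReal.ofReal (1 - stdNormalCdf ((log u - μ) / σ))),
            lintegral_lognormal_survival μ σ hσ]
  have htotal : ENNReal.ofReal (d + exp (μ + σ ^ 2 / 2))
      = (∫⁻ t in Ioc 0 d, G t) + ∫⁻ t in Ioi d, G t := by
    rw [add_comm, ← hmean, ← lintegral_lognormal_survival μt σt hσt,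
      ← Ioc_union_Ioi_eq_Ioi hd.le, lintegral_union measurableSet_Ioi (Ioc_disjoint_Ioi le_rfl)]
  have := htotal ▸ ENNReal.add_lt_add_of_lt_of_le
    (ne_top_of_le_ne_top ENNReal.ofReal_ne_top htail) hhead htail
  rw [← ENNReal.ofReal_add hd.le (exp_pos _).le] at this
  exact lt_irrefl _ this

lemma lognormal_moment_match {μ σ d e w μt σt : ℝ} (hσ : 0 < σ) (hd : 0 < d)
    (he : e = exp (μ + σ ^ 2 / 2)) (hw : w = exp (2 * μ + σ ^ 2) * (exp (σ ^ 2) - 1))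
    (hμt : μt = (1 / 2) * log ((e + d) ^ 4 / (w + (e + d) ^ 2)))
    (hσt : σt = √(log (w / (e + d) ^ 2 + 1))) :
    0 < σt ∧ σt < σ ∧ exp (μt + σt ^ 2 / 2) = exp (μ + σ ^ 2 / 2) + d := by
  set r := w / (e + d) ^ 2 + 1 with hr
  have he0 : 0 < e := he ▸ exp_pos _
  have hed : 0 < e + d := by linarith
  have hw_eq : w = e ^ 2 * (exp (σ ^ 2) - 1) := by
    rw [hw, he, ← exp_nat_mul]
    push_cast
    ring_nf
  have hw0 : 0 < w :=
    hw_eq ▸ mul_pos (by positivity) (sub_pos.2 (one_lt_exp_iff.2 (by positivity)))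
  have hr1 : 1 < r := lt_add_of_pos_left 1 (by positivity)
  -- the shift by `d` lowers the squared coefficient of variation `w / mean²` below `exp σ² - 1`
  have hrσ : r < exp (σ ^ 2) := by
    have hlt : w / (e + d) ^ 2 < w / e ^ 2 :=
      div_lt_div_of_pos_left hw0 (by positivity) (by nlinarith)
    have hcv : w / e ^ 2 = exp (σ ^ 2) - 1 := by
      rw [hw_eq]
      field_simp
    linarith
  have hσt_sq : σt ^ 2 = log r := hσt ▸ sq_sqrt (log_pos hr1).le
  refine ⟨hσt ▸ sqrt_pos.2 (log_pos hr1), lt_of_pow_lt_pow_left₀ 2 hσ.le ?_, ?_⟩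
  · rw [hσt_sq, ← log_exp (σ ^ 2)]
    exact log_lt_log (by linarith) hrσ
  · have hquot : (e + d) ^ 4 / (w + (e + d) ^ 2) = (e + d) ^ 2 / r := by
      rw [hr]
      field_simp
    rw [he.symm, hσt_sq, hμt, hquot, log_div (by positivity) (by positivity), log_pow]
    convert exp_log hed using 2
    push_cast
    ring

section Unimodal

variable {g : ℝ → ℝ} {p x₀ L : ℝ}

lemma exists_mem_Ioo_eq_of_tendsto_nhdsGT (hpx : p < x₀) (hcont : ContinuousOn g (Ioi p))
    (hleft : Tendsto g (𝓝[>] p) atBot) (hL : L < g x₀) : ∃ a ∈ Ioo p x₀, g a = L := by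
  obtain ⟨l, hlL, hl⟩ :=
    ((hleft.eventually (eventually_lt_atBot L)).and (Ioo_mem_nhdsGT hpx)).exists
  obtain ⟨a, ha, hga⟩ := intermediate_value_Ioo hl.2.le
    (hcont.mono fun x hx => hl.1.trans_le hx.1) ⟨hlL, hL⟩
  exact ⟨a, ⟨hl.1.trans ha.1, ha.2⟩, hga⟩

lemma exists_mem_Ioi_eq_of_tendsto_atTop (hpx : p < x₀) (hcont : ContinuousOn g (Ioi p))
    (hright : Tendsto g atTop atBot) (hL : L < g x₀) : ∃ b ∈ Ioi x₀, g b = L := by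
  obtain ⟨r, hrL, hr⟩ :=
    ((hright.eventually (eventually_lt_atBot L)).and (eventually_gt_atTop x₀)).exists
  obtain ⟨b, hb, hgb⟩ := intermediate_value_Ioo' hr.le
    (hcont.mono fun x hx => hpx.trans_le hx.1) ⟨hrL, hL⟩
  exact ⟨b, hb.1, hgb⟩

lemma exists_superlevel_eq_Ioo_of_unimodal (hpx : p < x₀) (hcont : ContinuousOn g (Ioi p))
    (hmono : StrictMonoOn g (Ioc p x₀)) (hanti : StrictAntiOn g (Ici x₀))
    (hleft : Tendsto g (𝓝[>] p) atBot) (hright : Tendsto g atTop atBot)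
    {q : ℝ} (hq : p < q) (hLq : L < g q) :
    ∃ a b, p < a ∧ a < x₀ ∧ x₀ < b ∧ g a = L ∧ g b = L ∧
      (∀ a', p < a' → a' < x₀ → g a' = L → a' = a) ∧
      (∀ b', x₀ < b' → g b' = L → b' = b) ∧
      ∀ x, p < x → (L < g x ↔ a < x ∧ x < b) := by
  have hmax : g q ≤ g x₀ := by
    rcases le_total q x₀ with h | h
    · exact hmono.monotoneOn ⟨hq, h⟩ ⟨hpx, le_rfl⟩ h
    · exact hanti.antitoneOn self_mem_Ici h h
  have hL := hLq.trans_le hmax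
  obtain ⟨a, ⟨hpa, hax₀⟩, hga⟩ := exists_mem_Ioo_eq_of_tendsto_nhdsGT hpx hcont hleft hL
  obtain ⟨b, hx₀b, hgb⟩ := exists_mem_Ioi_eq_of_tendsto_atTop hpx hcont hright hL
  have ha : a ∈ Ioc p x₀ := ⟨hpa, hax₀.le⟩
  have hb : b ∈ Ici x₀ := mem_Ici.2 hx₀b.le
  refine ⟨a, b, hpa, hax₀, hx₀b, hga, hgb, fun a' hpa' ha'x₀ hga' => ?_,
    fun b' hx₀b' hgb' => hanti.injOn (mem_Ici.2 hx₀b'.le) hb (hgb'.trans hgb.symm),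
    fun x hpx => ?_⟩
  · exact hmono.injOn ⟨hpa', ha'x₀.le⟩ ha (hga'.trans hga.symm)
  rcases le_total x x₀ with hxx₀ | hx₀x
  · rw [← hga, hmono.lt_iff_lt ha ⟨hpx, hxx₀⟩]
    exact (and_iff_left (hxx₀.trans_lt hx₀b)).symm
  · rw [← hgb, hanti.lt_iff_gt hb hx₀x]
    exact (and_iff_right (hax₀.trans_le hx₀x)).symm

end Unimodal

noncomputable def logPowRatio (σ σt d x : ℝ) : ℝ := σt * log (x - d) - σ * log x

section LogPowRatio

variable {σ σt d : ℝ}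

lemma rpow_div_rpow_eq_exp_logPowRatio {x : ℝ} (hd : 0 ≤ d) (hx : d < x) :
    (x - d) ^ σt / x ^ σ = exp (logPowRatio σ σt d x) := by
  rw [rpow_def_of_pos (sub_pos.2 hx), rpow_def_of_pos (hd.trans_lt hx), ← exp_sub,
    logPowRatio, mul_comm σt, mul_comm σ]

lemma hasDerivAt_logPowRatio {x : ℝ} (hx : x ≠ 0) (hxd : x ≠ d) :
    HasDerivAt (logPowRatio σ σt d) (σt / (x - d) - σ / x) x := by
  have h := (((hasDerivAt_id x).sub_const d).log (sub_ne_zero.2 hxd)).const_mul σt |>.sub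
    ((hasDerivAt_log hx).const_mul σ)
  simp only [one_mul, div_eq_mul_inv] at h ⊢
  exact h

lemma continuousOn_logPowRatio (hd : 0 ≤ d) : ContinuousOn (logPowRatio σ σt d) (Ioi d) :=
  fun _ hx => (hasDerivAt_logPowRatio (hd.trans_lt hx).ne' (ne_of_gt hx)).continuousAt
    |>.continuousWithinAt

lemma strictMonoOn_logPowRatio (hd : 0 < d) (hlt : σt < σ) :
    StrictMonoOn (logPowRatio σ σt d) (Ioc d (σ * d / (σ - σt))) := by
  refine strictMonoOn_of_deriv_pos (convex_Ioc _ _)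
    ((continuousOn_logPowRatio hd.le).mono fun x hx => hx.1) fun x hx => ?_
  rw [interior_Ioc] at hx
  have hx0 : 0 < x := hd.trans hx.1
  have hxd : 0 < x - d := sub_pos.2 hx.1
  have hxmax : x * (σ - σt) < σ * d := (lt_div_iff₀ (sub_pos.2 hlt)).1 hx.2
  rw [(hasDerivAt_logPowRatio hx0.ne' (ne_of_gt hx.1)).deriv, sub_pos, div_lt_div_iff₀ hx0 hxd]
  linarith

lemma lt_mul_div_sub (hd : 0 < d) (hσt : 0 < σt) (hlt : σt < σ) : d < σ * d / (σ - σt) := by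
  rw [lt_div_iff₀ (sub_pos.2 hlt)]
  nlinarith

lemma strictAntiOn_logPowRatio (hd : 0 < d) (hσt : 0 < σt) (hlt : σt < σ) :
    StrictAntiOn (logPowRatio σ σt d) (Ici (σ * d / (σ - σt))) := by
  have hd_lt := lt_mul_div_sub hd hσt hlt
  refine strictAntiOn_of_deriv_neg (convex_Ici _)
    ((continuousOn_logPowRatio hd.le).mono fun x hx => hd_lt.trans_le hx) fun x hx => ?_
  rw [interior_Ici] at hx
  have hdx : d < x := hd_lt.trans hx
  have hx0 : 0 < x := hd.trans hdx
  have hxd : 0 < x - d := sub_pos.2 hdx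
  have hxmax : σ * d < x * (σ - σt) := (div_lt_iff₀ (sub_pos.2 hlt)).1 hx
  rw [(hasDerivAt_logPowRatio hx0.ne' (ne_of_gt hdx)).deriv, sub_neg, div_lt_div_iff₀ hxd hx0]
  linarith

lemma tendsto_logPowRatio_nhdsGT (hd : 0 < d) (hσt : 0 < σt) :
    Tendsto (logPowRatio σ σt d) (𝓝[>] d) atBot := by
  have hsub : Tendsto (fun x => x - d) (𝓝[>] d) (𝓝[>] 0) :=
    tendsto_nhdsWithin_of_tendsto_nhds_of_eventually_within _
      (((continuous_sub_right d).tendsto' d 0 (sub_self d)).mono_left nhdsWithin_le_nhds)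
      (eventually_nhdsWithin_of_forall fun _ hx => mem_Ioi.2 (sub_pos.2 hx))
  have hlog : Tendsto (fun x => log x) (𝓝[>] d) (𝓝 (log d)) :=
    ((continuousAt_log hd.ne').tendsto).mono_left nhdsWithin_le_nhds
  exact ((tendsto_log_nhdsGT_zero.comp hsub).const_mul_atBot hσt).atBot_add
    (hlog.const_mul σ).neg |>.congr fun x => by simp [logPowRatio, sub_eq_add_neg]

lemma tendsto_logPowRatio_atTop (hd : 0 ≤ d) (hσt : 0 ≤ σt) (hlt : σt < σ) :
    Tendsto (logPowRatio σ σt d) atTop atBot := by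
  refine tendsto_atBot_mono' atTop ?_ (tendsto_log_atTop.const_mul_atTop_of_neg (sub_neg.2 hlt))
  filter_upwards [eventually_gt_atTop d] with x hx
  have := log_le_log (sub_pos.2 hx) (sub_le_self x hd)
  rw [logPowRatio]
  nlinarith

lemma div_lt_div_iff_lt_logPowRatio {μ μt : ℝ} (hσ : 0 < σ) (hσt : 0 < σt) (x : ℝ) :
    (log x - μt) / σt < (log (x - d) - μ) / σ ↔ σt * μ - σ * μt < logPowRatio σ σt d x := by
  rw [div_lt_div_iff₀ hσt hσ, logPowRatio]
  constructor <;> intro h <;> linarith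

end LogPowRatio

/-- Proposition 2: with `A₁` lognormal with parameters `(μ, σ²)`,
`d₂ > 0`, `V* = A₁ + d₂` and moment-matched lognormal parameters `(μ̃, σ̃²)` (so that
`σ̃ < σ`), there are unique `d₁* ∈ (d₂, σd₂/(σ−σ̃))` and `d₁** > σd₂/(σ−σ̃)` with
`f(d₁*) = f(d₁**) = exp(σ̃μ − σμ̃)` where `f(x) = (x − d₂)^σ̃/x^σ`; and for `d₁ > d₂`
the lognormal model underestimates the limiting default probability of firm 1 under
cross-ownership of debt only, i.e.
`Φ((ln d₁ − μ̃)/σ̃) < Φ((ln(d₁ − d₂) − μ)/σ)`, iff `d₁* < d₁ < d₁**`. -/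
theorem proposition_2
    (μ σ d₂ e w μt σt : ℝ) (hσ : 0 < σ) (hd₂ : 0 < d₂)
    (he : e = Real.exp (μ + σ ^ 2 / 2))
    (hw : w = Real.exp (2 * μ + σ ^ 2) * (Real.exp (σ ^ 2) - 1))
    (hμt : μt = (1 / 2) * Real.log ((e + d₂) ^ 4 / (w + (e + d₂) ^ 2)))
    (hσt : σt = Real.sqrt (Real.log (w / (e + d₂) ^ 2 + 1))) :
    σt < σ ∧
    ∃ a b : ℝ,
      d₂ < a ∧ a < σ * d₂ / (σ - σt) ∧ σ * d₂ / (σ - σt) < b ∧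
      (a - d₂) ^ σt / a ^ σ = Real.exp (σt * μ - σ * μt) ∧
      (b - d₂) ^ σt / b ^ σ = Real.exp (σt * μ - σ * μt) ∧
      (∀ a' b' : ℝ, d₂ < a' → a' < σ * d₂ / (σ - σt) → σ * d₂ / (σ - σt) < b' →
        (a' - d₂) ^ σt / a' ^ σ = Real.exp (σt * μ - σ * μt) →
        (b' - d₂) ^ σt / b' ^ σ = Real.exp (σt * μ - σ * μt) →
        a' = a ∧ b' = b) ∧
      (∀ d₁ : ℝ, d₂ < d₁ →
        (stdNormalCdf ((Real.log d₁ - μt) / σt) <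
            stdNormalCdf ((Real.log (d₁ - d₂) - μ) / σ) ↔
          a < d₁ ∧ d₁ < b)) := by
  obtain ⟨hσt0, hlt, hmean⟩ := lognormal_moment_match hσ hd₂ he hw hμt hσt
  have hcrit := div_lt_div_iff_lt_logPowRatio (d := d₂) (μ := μ) (μt := μt) hσ hσt0
  obtain ⟨q, hq, hq_lt⟩ := exists_lt_of_lognormal_mean_eq_add hσ hσt0 hd₂ hmean
  have hd₂x₀ := lt_mul_div_sub hd₂ hσt0 hlt
  obtain ⟨a, b, hd₂a, hax₀, hx₀b, hga, hgb, huniq_a, huniq_b, hiff⟩ :=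
    exists_superlevel_eq_Ioo_of_unimodal hd₂x₀ (continuousOn_logPowRatio hd₂.le)
      (strictMonoOn_logPowRatio hd₂ hlt) (strictAntiOn_logPowRatio hd₂ hσt0 hlt)
      (tendsto_logPowRatio_nhdsGT hd₂ hσt0) (tendsto_logPowRatio_atTop hd₂.le hσt0.le hlt)
      hq ((hcrit q).1 hq_lt)
  have hlevel : ∀ x, d₂ < x → ((x - d₂) ^ σt / x ^ σ = exp (σt * μ - σ * μt) ↔
      logPowRatio σ σt d₂ x = σt * μ - σ * μt) := fun x hx => by
    rw [rpow_div_rpow_eq_exp_logPowRatio hd₂.le hx, exp_eq_exp]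
  refine ⟨hlt, a, b, hd₂a, hax₀, hx₀b, (hlevel a hd₂a).2 hga,
    (hlevel b (hd₂x₀.trans hx₀b)).2 hgb, fun a' b' hd₂a' ha'x₀ hx₀b' ha' hb' => ⟨?_, ?_⟩,
    fun d₁ hd₁ => ?_⟩
  · exact huniq_a a' hd₂a' ha'x₀ ((hlevel a' hd₂a').1 ha')
  · exact huniq_b b' hx₀b' ((hlevel b' (hd₂x₀.trans hx₀b')).1 hb')
  · rw [stdNormalCdf_strictMono.lt_iff_lt, hcrit, hiff d₁ hd₁]
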